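/- arXiv:1710.03102 — 3 statements merged into one kernel-verified Lean document; each statement's English description precedes it below -/
import Mathlib

section
/- If w_l > 0, then the global smooth solution w of the Burgers Cauchy problem satisfies, for every (x,t) ∈ (−∞, 0] × [0,∞), the pointwise bounds |w(x,t) − w_l| ≤ w̃ e^{−2(|x| + w_l t)} and |w_x(x,t)| ≤ 2 w̃ e^{−2(|x| + w_l t)}. -/
open Real Set

noncomputable section

/-- `∂w/∂t` for a function `w = w(x,t)`. -/
def pdt (w : ℝ → ℝ → ℝ) (x t : ℝ) : ℝ := deriv (fun s => w x s) t

/-- `∂w/∂x` for a function `w = w(x,t)`. -/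
def pdx (w : ℝ → ℝ → ℝ) (x t : ℝ) : ℝ := deriv (fun y => w y t) x

/-- `w` is a (global-in-time) smooth solution of the Cauchy problem for the Burgers
equation `w_t + w w_x = 0` on `ℝ × (0,∞)` with the initial data
`w(x,0) = (w_r + w_l)/2 + ((w_r − w_l)/2) tanh x`. -/
def IsBurgersSolution (wl wr : ℝ) (w : ℝ → ℝ → ℝ) : Prop :=
  ContDiffOn ℝ (⊤ : ℕ∞) (fun p : ℝ × ℝ => w p.1 p.2) (Set.univ ×ˢ Set.Ici (0 : ℝ)) ∧
  (∀ x t : ℝ, 0 < t → pdt w x t + w x t * pdx w x t = 0) ∧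
  (∀ x : ℝ, w x 0 = (wr + wl) / 2 + ((wr - wl) / 2) * Real.tanh x)

/-! ### Auxiliary lemmas about `tanh` -/

lemma myTanh_lt_one (x : ℝ) : Real.tanh x < 1 := by
  rw [Real.tanh_eq_sinh_div_cosh, div_lt_one (Real.cosh_pos x)]
  exact Real.sinh_lt_cosh x

lemma myNeg_one_lt_tanh (x : ℝ) : -1 < Real.tanh x := by
  have := myTanh_lt_one (-x)
  rw [Real.tanh_neg] at this
  linarith

lemma myOne_add_tanh_le (x : ℝ) : 1 + Real.tanh x ≤ 2 * Real.exp (2 * x) := by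
  have hc := Real.cosh_pos x
  have h1 : 1 + Real.tanh x = Real.exp x / Real.cosh x := by
    rw [Real.tanh_eq_sinh_div_cosh, ← Real.cosh_add_sinh]
    field_simp
  rw [h1, div_le_iff₀ hc, Real.cosh_eq]
  have h2 : Real.exp (2 * x) = Real.exp x * Real.exp x := by
    rw [← Real.exp_add]; ring_nf
  have h3 : Real.exp x ≤ Real.exp (2*x) * Real.exp (-x) := by
    rw [← Real.exp_add]; apply Real.exp_le_exp.2; linarith
  nlinarith [Real.exp_pos x, Real.exp_pos (-x), Real.exp_pos (2*x)]

lemma myHasDerivAt_tanh (x : ℝ) : HasDerivAt Real.tanh (1 - Real.tanh x ^ 2) x := by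
  have hc := Real.cosh_pos x
  have h : HasDerivAt (fun y => Real.sinh y / Real.cosh y)
      ((Real.cosh x * Real.cosh x - Real.sinh x * Real.sinh x) / Real.cosh x ^ 2) x :=
    (Real.hasDerivAt_sinh x).div (Real.hasDerivAt_cosh x) (ne_of_gt hc)
  have he : (fun y => Real.sinh y / Real.cosh y) = Real.tanh := by
    funext y; rw [Real.tanh_eq_sinh_div_cosh]
  rw [he] at h
  convert h using 1
  rw [Real.tanh_eq_sinh_div_cosh]
  have := Real.cosh_sq_sub_sinh_sq x
  field_simp

lemma myOne_sub_tanh_sq_le (x : ℝ) : 1 - Real.tanh x ^ 2 ≤ 4 * Real.exp (2 * x) := by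
  have h1 := myOne_add_tanh_le x
  have h2 := myNeg_one_lt_tanh x
  have h3 := myTanh_lt_one x
  nlinarith [Real.exp_pos (2*x)]

lemma myOne_sub_tanh_sq_pos (x : ℝ) : 0 < 1 - Real.tanh x ^ 2 := by
  have h2 := myNeg_one_lt_tanh x
  have h3 := myTanh_lt_one x
  nlinarith

/-! ### Auxiliary lemmas about the solution -/

variable {w : ℝ → ℝ → ℝ}

lemma myMemNhds {x t : ℝ} (ht : 0 < t) :
    (Set.univ ×ˢ Set.Ici (0:ℝ)) ∈ nhds ((x, t) : ℝ × ℝ) := by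
  have hopen : IsOpen ((Set.univ : Set ℝ) ×ˢ Set.Ioi (0:ℝ)) := isOpen_univ.prod isOpen_Ioi
  exact Filter.mem_of_superset (hopen.mem_nhds (by simp [ht]))
    (Set.prod_mono_right Set.Ioi_subset_Ici_self)

lemma myContDiffAt (hsm : ContDiffOn ℝ (⊤ : ℕ∞) (fun p : ℝ × ℝ => w p.1 p.2) (Set.univ ×ˢ Set.Ici (0:ℝ)))
    {x t : ℝ} (ht : 0 < t) : ContDiffAt ℝ (⊤ : ℕ∞) (fun p : ℝ × ℝ => w p.1 p.2) (x, t) :=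
  hsm.contDiffAt (myMemNhds ht)

lemma myHasFDerivAt (hsm : ContDiffOn ℝ (⊤ : ℕ∞) (fun p : ℝ × ℝ => w p.1 p.2) (Set.univ ×ˢ Set.Ici (0:ℝ)))
    {x t : ℝ} (ht : 0 < t) :
    HasFDerivAt (fun p : ℝ × ℝ => w p.1 p.2) (fderiv ℝ (fun p : ℝ × ℝ => w p.1 p.2) (x, t)) (x, t) :=
  ((myContDiffAt hsm ht).differentiableAt (by simp)).hasFDerivAt

lemma myPdx_eq (hsm : ContDiffOn ℝ (⊤ : ℕ∞) (fun p : ℝ × ℝ => w p.1 p.2) (Set.univ ×ˢ Set.Ici (0:ℝ)))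
    {x t : ℝ} (ht : 0 < t) :
    pdx w x t = fderiv ℝ (fun p : ℝ × ℝ => w p.1 p.2) (x, t) (1, 0) := by
  have hline : HasDerivAt (fun y : ℝ => ((y, t) : ℝ × ℝ)) ((1:ℝ), (0:ℝ)) x :=
    (hasDerivAt_id x).prodMk (hasDerivAt_const x t)
  have h := (myHasFDerivAt hsm ht).comp_hasDerivAt x hline
  exact h.deriv

lemma myPdt_eq (hsm : ContDiffOn ℝ (⊤ : ℕ∞) (fun p : ℝ × ℝ => w p.1 p.2) (Set.univ ×ˢ Set.Ici (0:ℝ)))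
    {x t : ℝ} (ht : 0 < t) :
    pdt w x t = fderiv ℝ (fun p : ℝ × ℝ => w p.1 p.2) (x, t) (0, 1) := by
  have hline : HasDerivAt (fun s : ℝ => ((x, s) : ℝ × ℝ)) ((0:ℝ), (1:ℝ)) t :=
    (hasDerivAt_const t x).prodMk (hasDerivAt_id t)
  have h := (myHasFDerivAt hsm ht).comp_hasDerivAt t hline
  exact h.deriv

/-- derivative of `s ↦ w (x0 - c*s) (t0 - s) - c` along the backward characteristic line. -/
lemma myCharDeriv (hsm : ContDiffOn ℝ (⊤ : ℕ∞) (fun p : ℝ × ℝ => w p.1 p.2) (Set.univ ×ˢ Set.Ici (0:ℝ)))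
    (hpde : ∀ x t : ℝ, 0 < t → pdt w x t + w x t * pdx w x t = 0)
    (x0 t0 c : ℝ) {s : ℝ} (hs : 0 < t0 - s) :
    HasDerivAt (fun s : ℝ => w (x0 - c*s) (t0 - s) - c)
      (pdx w (x0 - c*s) (t0 - s) * (w (x0 - c*s) (t0 - s) - c)) s := by
  have hq : HasDerivAt (fun s : ℝ => ((x0 - c*s, t0 - s) : ℝ × ℝ)) ((-c, -1) : ℝ × ℝ) s := by
    have h1 : HasDerivAt (fun s : ℝ => x0 - c*s) (-c) s := by
      simpa using ((hasDerivAt_id s).const_mul c).const_sub x0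
    have h2 : HasDerivAt (fun s : ℝ => t0 - s) (-1) s := by
      simpa using (hasDerivAt_id s).const_sub t0
    exact h1.prodMk h2
  have hF := myHasFDerivAt hsm (x := x0 - c*s) hs
  have h := hF.comp_hasDerivAt s hq
  have hval : fderiv ℝ (fun p : ℝ × ℝ => w p.1 p.2) (x0 - c*s, t0 - s) ((-c, -1) : ℝ × ℝ)
      = pdx w (x0 - c*s) (t0 - s) * (w (x0 - c*s) (t0 - s) - c) := by
    set L := fderiv ℝ (fun p : ℝ × ℝ => w p.1 p.2) (x0 - c*s, t0 - s) with hL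
    have hdecomp : ((-c, -1) : ℝ × ℝ) = (-c) • ((1,0) : ℝ × ℝ) + (-1 : ℝ) • ((0,1) : ℝ × ℝ) := by
      simp [Prod.ext_iff]
    rw [hdecomp, map_add, map_smul, map_smul, smul_eq_mul, smul_eq_mul]
    have hA : L ((1,0) : ℝ × ℝ) = pdx w (x0 - c*s) (t0 - s) := (myPdx_eq hsm hs).symm
    have hB : L ((0,1) : ℝ × ℝ) = pdt w (x0 - c*s) (t0 - s) := (myPdt_eq hsm hs).symm
    rw [hA, hB]
    have := hpde (x0 - c*s) (t0 - s) hs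
    nlinarith [this]
  rw [hval] at h
  exact h.sub_const c

/-- The implicit characteristic relation. -/
lemma myImplicit {wl wr : ℝ}
    (hsm : ContDiffOn ℝ (⊤ : ℕ∞) (fun p : ℝ × ℝ => w p.1 p.2) (Set.univ ×ˢ Set.Ici (0:ℝ)))
    (hpde : ∀ x t : ℝ, 0 < t → pdt w x t + w x t * pdx w x t = 0)
    (hinit : ∀ x : ℝ, w x 0 = (wr + wl) / 2 + ((wr - wl) / 2) * Real.tanh x)
    (x t : ℝ) (ht : 0 ≤ t) :
    w x t = (wr + wl) / 2 + ((wr - wl) / 2) * Real.tanh (x - w x t * t) := by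
  rcases eq_or_lt_of_le ht with h0 | hpos
  · rw [← h0]
    simpa using hinit x
  set c := w x t with hc
  set g : ℝ → ℝ := fun s => w (x - c*s) (t - s) - c with hg
  -- Step 1: g vanishes on [0, t)
  have hstep1 : ∀ b : ℝ, 0 ≤ b → b < t → g b = 0 := by
    intro b hb0 hbt
    -- bound on pdx along the compact path
    set U : Set (ℝ × ℝ) := Set.univ ×ˢ Set.Ioi (0:ℝ) with hU
    have hUopen : IsOpen U := isOpen_univ.prod isOpen_Ioi
    have hF : ContinuousOn (fderiv ℝ (fun p : ℝ × ℝ => w p.1 p.2)) U :=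
      (hsm.mono (Set.prod_mono_right Set.Ioi_subset_Ici_self)).continuousOn_fderiv_of_isOpen
        hUopen (by simp)
    set q : ℝ → ℝ × ℝ := fun s => (x - c*s, t - s) with hq
    have hqcont : Continuous q := by fun_prop
    have hqmem : ∀ s ∈ Set.Icc (0:ℝ) b, q s ∈ U := by
      intro s hs
      simp only [hq, hU, Set.mem_prod, Set.mem_univ, Set.mem_Ioi, true_and]
      linarith [hs.2]
    have hcomp : ContinuousOn (fun s => fderiv ℝ (fun p : ℝ × ℝ => w p.1 p.2) (q s))
        (Set.Icc (0:ℝ) b) := hF.comp hqcont.continuousOn hqmem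
    obtain ⟨K, hK⟩ := (isCompact_Icc (a := (0:ℝ)) (b := b)).exists_bound_of_continuousOn hcomp
    have hpdx_bound : ∀ s ∈ Set.Icc (0:ℝ) b, |pdx w (x - c*s) (t - s)| ≤ K := by
      intro s hs
      have hts : 0 < t - s := by linarith [hs.2]
      have h1 : pdx w (x - c*s) (t - s)
          = fderiv ℝ (fun p : ℝ × ℝ => w p.1 p.2) (q s) ((1,0) : ℝ × ℝ) := myPdx_eq hsm hts
      rw [h1, ← Real.norm_eq_abs]
      calc ‖fderiv ℝ (fun p : ℝ × ℝ => w p.1 p.2) (q s) ((1,0) : ℝ × ℝ)‖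
          ≤ ‖fderiv ℝ (fun p : ℝ × ℝ => w p.1 p.2) (q s)‖ * ‖((1,0) : ℝ × ℝ)‖ :=
            ContinuousLinearMap.le_opNorm _ _
        _ ≤ K * 1 := by
            apply mul_le_mul (hK s hs) _ (norm_nonneg _)
              ((norm_nonneg _).trans (hK s hs))
            · simp [Prod.norm_def]
        _ = K := mul_one K
    -- Gronwall
    have hderiv : ∀ s ∈ Set.Ico (0:ℝ) b, HasDerivWithinAt g
        (pdx w (x - c*s) (t - s) * g s) (Set.Ici s) s := by
      intro s hs
      exact (myCharDeriv hsm hpde x t c (by linarith [hs.2])).hasDerivWithinAt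
    have hcont : ContinuousOn g (Set.Icc 0 b) := by
      intro s hs
      exact ((myCharDeriv hsm hpde x t c (by linarith [hs.2])).continuousAt).continuousWithinAt
    have hbound : ∀ s ∈ Set.Ico (0:ℝ) b, ‖pdx w (x - c*s) (t - s) * g s‖ ≤ K * ‖g s‖ + 0 := by
      intro s hs
      rw [Real.norm_eq_abs, abs_mul, add_zero, Real.norm_eq_abs]
      exact mul_le_mul_of_nonneg_right (hpdx_bound s (Set.mem_Icc_of_Ico hs)) (abs_nonneg _)
    have hg0 : ‖g 0‖ ≤ 0 := by simp [hg, ← hc]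
    have := norm_le_gronwallBound_of_norm_deriv_right_le hcont hderiv hg0 hbound b
      (Set.right_mem_Icc.2 hb0)
    rw [gronwallBound_ε0_δ0] at this
    exact norm_le_zero_iff.1 this
  -- Step 2: pass to the limit s → t⁻
  have hgt : w (x - c*t) 0 = c := by
    set q : ℝ → ℝ × ℝ := fun s => (x - c*s, t - s) with hq
    have hqcont : Continuous q := by fun_prop
    have hqmem : ∀ s ∈ Set.Icc (0:ℝ) t, q s ∈ Set.univ ×ˢ Set.Ici (0:ℝ) := by
      intro s hs
      simp only [hq, Set.mem_prod, Set.mem_univ, Set.mem_Ici, true_and]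
      linarith [hs.2]
    have hWcont : ContinuousOn (fun s => w (x - c*s) (t - s)) (Set.Icc 0 t) :=
      hsm.continuousOn.comp hqcont.continuousOn hqmem
    have htend : Filter.Tendsto (fun s => w (x - c*s) (t - s))
        (nhdsWithin t (Set.Ico 0 t)) (nhds (w (x - c*t) 0)) := by
      have h1 := (hWcont t (Set.right_mem_Icc.2 (le_of_lt hpos))).tendsto
      have h2 : nhdsWithin t (Set.Ico 0 t) ≤ nhdsWithin t (Set.Icc 0 t) :=
        nhdsWithin_mono t Set.Ico_subset_Icc_self
      simpa using h1.comp (Filter.Tendsto.mono_left Filter.tendsto_id h2 : Filter.Tendsto id _ _)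
    have htend2 : Filter.Tendsto (fun s => w (x - c*s) (t - s))
        (nhdsWithin t (Set.Ico 0 t)) (nhds c) := by
      apply Filter.Tendsto.congr' _ tendsto_const_nhds
      filter_upwards [self_mem_nhdsWithin] with s hs
      have := hstep1 s hs.1 hs.2
      simp only [hg] at this
      linarith
    have hne : (nhdsWithin t (Set.Ico 0 t)).NeBot := by
      rw [← mem_closure_iff_nhdsWithin_neBot, closure_Ico (ne_of_lt hpos)]
      exact Set.right_mem_Icc.2 (le_of_lt hpos)
    exact tendsto_nhds_unique htend htend2
  have := hinit (x - c*t)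
  rw [hgt] at this
  rw [hc]
  exact this

lemma myHasDerivAt_x {wl wr : ℝ}
    (hsm : ContDiffOn ℝ (⊤ : ℕ∞) (fun p : ℝ × ℝ => w p.1 p.2) (Set.univ ×ˢ Set.Ici (0:ℝ)))
    (hinit : ∀ x : ℝ, w x 0 = (wr + wl) / 2 + ((wr - wl) / 2) * Real.tanh x)
    (x t : ℝ) (ht : 0 ≤ t) :
    HasDerivAt (fun y => w y t) (pdx w x t) x := by
  rcases eq_or_lt_of_le ht with h0 | hpos
  · subst h0
    have hfun : (fun y => w y 0) = fun y => (wr + wl) / 2 + ((wr - wl) / 2) * Real.tanh y :=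
      funext hinit
    have hd : HasDerivAt (fun y => (wr + wl) / 2 + ((wr - wl) / 2) * Real.tanh y)
        (((wr - wl) / 2) * (1 - Real.tanh x ^ 2)) x :=
      ((myHasDerivAt_tanh x).const_mul ((wr - wl) / 2)).const_add ((wr + wl) / 2)
    rw [← hfun] at hd
    have : pdx w x 0 = ((wr - wl) / 2) * (1 - Real.tanh x ^ 2) := hd.deriv
    rw [this]
    exact hd
  · have hline : HasDerivAt (fun y : ℝ => ((y, t) : ℝ × ℝ)) ((1:ℝ), (0:ℝ)) x :=
      (hasDerivAt_id x).prodMk (hasDerivAt_const x t)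
    have hd := (((myContDiffAt hsm hpos).differentiableAt
      (by simp)).hasFDerivAt).comp_hasDerivAt x hline
    have : pdx w x t = fderiv ℝ (fun p : ℝ × ℝ => w p.1 p.2) (x, t) ((1,0) : ℝ × ℝ) := hd.deriv
    rw [this]
    exact hd

lemma myPdx_formula {wl wr : ℝ} (h1 : 0 < wr - wl)
    (hsm : ContDiffOn ℝ (⊤ : ℕ∞) (fun p : ℝ × ℝ => w p.1 p.2) (Set.univ ×ˢ Set.Ici (0:ℝ)))
    (hpde : ∀ x t : ℝ, 0 < t → pdt w x t + w x t * pdx w x t = 0)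
    (hinit : ∀ x : ℝ, w x 0 = (wr + wl) / 2 + ((wr - wl) / 2) * Real.tanh x)
    (x t : ℝ) (ht : 0 ≤ t) :
    0 < pdx w x t ∧
      pdx w x t ≤ ((wr - wl) / 2) * (1 - Real.tanh (x - w x t * t) ^ 2) := by
  set d := pdx w x t with hdd
  set ξ := x - w x t * t with hξ
  have hd : HasDerivAt (fun y => w y t) d x := myHasDerivAt_x hsm hinit x t ht
  have hinner : HasDerivAt (fun y => y - w y t * t) (1 - d * t) x :=
    (hasDerivAt_id x).sub (hd.mul_const t)
  have htanh : HasDerivAt (fun y => Real.tanh (y - w y t * t))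
      ((1 - Real.tanh ξ ^ 2) * (1 - d * t)) x := HasDerivAt.comp (h₂ := Real.tanh) x (myHasDerivAt_tanh ξ) hinner
  have hrhs : HasDerivAt (fun y => (wr + wl) / 2 + ((wr - wl) / 2) * Real.tanh (y - w y t * t))
      (((wr - wl) / 2) * ((1 - Real.tanh ξ ^ 2) * (1 - d * t))) x :=
    (htanh.const_mul ((wr - wl) / 2)).const_add ((wr + wl) / 2)
  have hfun : (fun y => w y t)
      = fun y => (wr + wl) / 2 + ((wr - wl) / 2) * Real.tanh (y - w y t * t) :=
    funext fun y => myImplicit hsm hpde hinit y t ht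
  rw [← hfun] at hrhs
  have heq : d = ((wr - wl) / 2) * ((1 - Real.tanh ξ ^ 2) * (1 - d * t)) := hd.unique hrhs
  set D := ((wr - wl) / 2) * (1 - Real.tanh ξ ^ 2) with hD
  have hDpos : 0 < D := by
    have := myOne_sub_tanh_sq_pos ξ
    positivity
  have heq2 : d * (1 + D * t) = D := by rw [hD] at *; nlinarith [heq]
  have hden : 0 < 1 + D * t := by nlinarith
  have hdiv : d = D / (1 + D * t) := by
    field_simp
    linarith [heq2]
  constructor
  · rw [hdiv]; positivity
  · rw [hdiv]
    exact div_le_self hDpos.le (by nlinarith)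

/-- If `w_l > 0`, then for every `(x,t) ∈ (−∞,0] × [0,∞)` the smooth
solution of the Burgers Cauchy problem satisfies
`|w(x,t) − w_l| ≤ w̃ e^{−2(|x| + w_l t)}` and `|w_x(x,t)| ≤ 2 w̃ e^{−2(|x| + w_l t)}`. -/
theorem burgers_left_exponential_decay
    (wl wbar wr : ℝ) (hwbar : 0 < wbar)
    (h1 : 0 < wr - wl) (h2 : wr - wl < wbar)
    (w : ℝ → ℝ → ℝ) (hw : IsBurgersSolution wl wr w)
    (hwl : 0 < wl) :
    ∀ x t : ℝ, x ≤ 0 → 0 ≤ t →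
      |w x t - wl| ≤ (wr - wl) * Real.exp (-2 * (|x| + wl * t)) ∧
      |pdx w x t| ≤ 2 * (wr - wl) * Real.exp (-2 * (|x| + wl * t)) := by
  obtain ⟨hsm, hpde, hinit⟩ := hw
  intro x t hx ht
  set c := w x t with hc
  set ξ := x - c * t with hξ
  have hrel : c = (wr + wl) / 2 + ((wr - wl) / 2) * Real.tanh ξ :=
    myImplicit hsm hpde hinit x t ht
  have htl := myNeg_one_lt_tanh ξ
  have hcl : wl ≤ c := by nlinarith
  have hξle : 2 * ξ ≤ -2 * (|x| + wl * t) := by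
    rw [abs_of_nonpos hx]
    have : wl * t ≤ c * t := mul_le_mul_of_nonneg_right hcl ht
    rw [hξ]
    linarith
  have hexp : Real.exp (2 * ξ) ≤ Real.exp (-2 * (|x| + wl * t)) := Real.exp_le_exp.2 hξle
  have h1plus := myOne_add_tanh_le ξ
  constructor
  · have e0 : c - wl = ((wr - wl) / 2) * (1 + Real.tanh ξ) := by rw [hrel]; ring
    have e1 : ((wr - wl) / 2) * (1 + Real.tanh ξ) ≤ ((wr - wl) / 2) * (2 * Real.exp (2 * ξ)) :=
      mul_le_mul_of_nonneg_left h1plus (by linarith)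
    have e2 : (wr - wl) * Real.exp (2 * ξ) ≤ (wr - wl) * Real.exp (-2 * (|x| + wl * t)) :=
      mul_le_mul_of_nonneg_left hexp (le_of_lt h1)
    have hnn : 0 ≤ c - wl := by nlinarith
    rw [abs_of_nonneg hnn]
    nlinarith
  · obtain ⟨hdpos, hdle⟩ := myPdx_formula h1 hsm hpde hinit x t ht
    rw [abs_of_pos hdpos]
    have h4 := myOne_sub_tanh_sq_le ξ
    have e1 : ((wr - wl) / 2) * (1 - Real.tanh ξ ^ 2)
        ≤ ((wr - wl) / 2) * (4 * Real.exp (2 * ξ)) :=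
      mul_le_mul_of_nonneg_left h4 (by linarith)
    have e2 : 2 * (wr - wl) * Real.exp (2 * ξ)
        ≤ 2 * (wr - wl) * Real.exp (-2 * (|x| + wl * t)) :=
      mul_le_mul_of_nonneg_left hexp (by linarith)
    nlinarith [hdle]
end
end

section
/- If w_r < 0, then the global smooth solution w of the Burgers Cauchy problem satisfies, for every (x,t) ∈ [0,∞) × [0,∞), the pointwise bounds |w(x,t) − w_r| ≤ w̃ e^{−2(x + |w_r| t)} and |w_x(x,t)| ≤ 2 w̃ e^{−2(x + |w_r| t)}. -/
open Real Set

noncomputable section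

lemma slice_x {w : ℝ → ℝ → ℝ}
    (hsm : ContDiffOn ℝ (⊤ : ℕ∞) (fun p : ℝ × ℝ => w p.1 p.2) (Set.univ ×ˢ Set.Ici (0:ℝ)))
    {x t : ℝ} (ht : 0 ≤ t) :
    HasDerivAt (fun y => w y t)
      (fderivWithin ℝ (fun p : ℝ × ℝ => w p.1 p.2) (Set.univ ×ˢ Set.Ici (0:ℝ)) (x,t) (1,0)) x := by
  have hmem : ((x,t) : ℝ × ℝ) ∈ Set.univ ×ˢ Set.Ici (0:ℝ) := ⟨mem_univ _, ht⟩
  have hdf := (hsm.differentiableOn (by simp) (x,t) hmem).hasFDerivWithinAt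
  have hline : HasDerivAt (fun y : ℝ => ((y, t) : ℝ × ℝ)) (1,0) x :=
    (hasDerivAt_id x).prodMk (hasDerivAt_const x t)
  have h := hdf.comp_hasDerivWithinAt x (hline.hasDerivWithinAt (s := Set.univ))
    (fun y _ => (⟨mem_univ _, ht⟩ : ((y, t) : ℝ × ℝ) ∈ Set.univ ×ˢ Set.Ici (0:ℝ)))
  rw [hasDerivWithinAt_univ] at h
  exact h

lemma mem_nhds_S {x t : ℝ} (ht : 0 < t) :
    (Set.univ ×ˢ Set.Ici (0:ℝ)) ∈ nhds ((x,t) : ℝ × ℝ) := by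
  have hopen : IsOpen ((Set.univ : Set ℝ) ×ˢ Set.Ioi (0:ℝ)) := isOpen_univ.prod isOpen_Ioi
  exact Filter.mem_of_superset (hopen.mem_nhds ⟨mem_univ _, ht⟩)
    (Set.prod_mono subset_rfl Set.Ioi_subset_Ici_self)

lemma slice_t {w : ℝ → ℝ → ℝ}
    (hsm : ContDiffOn ℝ (⊤ : ℕ∞) (fun p : ℝ × ℝ => w p.1 p.2) (Set.univ ×ˢ Set.Ici (0:ℝ)))
    {x t : ℝ} (ht : 0 < t) :
    HasDerivAt (fun s => w x s)
      (fderivWithin ℝ (fun p : ℝ × ℝ => w p.1 p.2) (Set.univ ×ˢ Set.Ici (0:ℝ)) (x,t) (0,1)) t := by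
  have hmem : ((x,t) : ℝ × ℝ) ∈ Set.univ ×ˢ Set.Ici (0:ℝ) := ⟨mem_univ _, ht.le⟩
  have hdf : HasFDerivAt (fun p : ℝ × ℝ => w p.1 p.2)
      (fderivWithin ℝ (fun p : ℝ × ℝ => w p.1 p.2) (Set.univ ×ˢ Set.Ici (0:ℝ)) (x,t)) (x,t) :=
    ((hsm.differentiableOn (by simp) (x,t) hmem).hasFDerivWithinAt).hasFDerivAt (mem_nhds_S ht)
  have hline : HasDerivAt (fun s : ℝ => ((x, s) : ℝ × ℝ)) (0,1) t :=
    (hasDerivAt_const t x).prodMk (hasDerivAt_id t)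
  exact hdf.comp_hasDerivAt t hline
lemma char_const {w : ℝ → ℝ → ℝ}
    (hsm : ContDiffOn ℝ (⊤ : ℕ∞) (fun p : ℝ × ℝ => w p.1 p.2) (Set.univ ×ˢ Set.Ici (0:ℝ)))
    (hpde : ∀ x t : ℝ, 0 < t → pdt w x t + w x t * pdx w x t = 0)
    (ξ : ℝ) : ∀ T : ℝ, 0 ≤ T → w (ξ + w ξ 0 * T) T = w ξ 0 := by
  set f : ℝ × ℝ → ℝ := fun p => w p.1 p.2 with hf_def
  set S : Set (ℝ × ℝ) := Set.univ ×ˢ Set.Ici (0:ℝ) with hS_def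
  set c : ℝ := w ξ 0 with hc_def
  set p : ℝ → ℝ × ℝ := fun s => (ξ + c * s, s) with hp_def
  set g : ℝ → ℝ := fun s => w (ξ + c * s) s - c with hg_def
  have hUD : UniqueDiffOn ℝ S := uniqueDiffOn_univ.prod (uniqueDiffOn_Ici 0)
  have hFc : ContinuousOn (fderivWithin ℝ f S) S := hsm.continuousOn_fderivWithin hUD (by simp)
  have hp_cont : Continuous p :=
    (continuous_const.add (continuous_const.mul continuous_id)).prodMk continuous_id
  have hpS : ∀ s : ℝ, 0 ≤ s → p s ∈ S := fun s hs => ⟨mem_univ _, hs⟩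
  have hg_cont : ContinuousOn g (Set.Ici 0) := by
    have : ContinuousOn (fun s => f (p s)) (Set.Ici 0) :=
      hsm.continuousOn.comp hp_cont.continuousOn (fun s hs => hpS s hs)
    exact this.sub continuousOn_const
  have hg0 : g 0 = 0 := by simp [hg_def, hc_def]
  -- derivative of g at s > 0
  have hds : ∀ s : ℝ, 0 < s →
      HasDerivAt g (-(pdx w (ξ + c * s) s) * g s) s := by
    intro s hs
    have hmem : p s ∈ S := hpS s hs.le
    have hF : HasFDerivAt f (fderivWithin ℝ f S (p s)) (p s) :=
      ((hsm.differentiableOn (by simp) _ hmem).hasFDerivWithinAt).hasFDerivAt (mem_nhds_S hs)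
    have hpd : HasDerivAt p (c, 1) s := by
      have h1 : HasDerivAt (fun s : ℝ => ξ + c * s) c s := by
        simpa using ((hasDerivAt_id s).const_mul c).const_add ξ
      exact h1.prodMk (hasDerivAt_id s)
    have hcomp : HasDerivAt (fun u => f (p u)) (fderivWithin ℝ f S (p s) (c,1)) s :=
      hF.comp_hasDerivAt s hpd
    have hgd : HasDerivAt g (fderivWithin ℝ f S (p s) (c,1)) s := hcomp.sub_const c
    have hlin : fderivWithin ℝ f S (p s) (c,1)
        = c * fderivWithin ℝ f S (p s) (1,0) + fderivWithin ℝ f S (p s) (0,1) := by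
      have hv : ((c,1) : ℝ × ℝ) = c • ((1:ℝ),(0:ℝ)) + ((0:ℝ),(1:ℝ)) := by
        ext <;> simp
      rw [hv, map_add, map_smul, smul_eq_mul]
    have hx : pdx w (ξ + c * s) s = fderivWithin ℝ f S (p s) (1,0) := by
      simp only [hf_def, hS_def, hp_def]
      exact ((slice_x hsm (x := ξ + c * s) hs.le).deriv)
    have ht : pdt w (ξ + c * s) s = fderivWithin ℝ f S (p s) (0,1) := by
      simp only [hf_def, hS_def, hp_def]
      exact ((slice_t hsm (x := ξ + c * s) hs).deriv)
    have hpde' := hpde (ξ + c * s) s hs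
    have hval : fderivWithin ℝ f S (p s) (c,1) = -(pdx w (ξ + c * s) s) * g s := by
      rw [hlin, ← hx, ← ht]
      have h2 : pdt w (ξ + c * s) s = -(w (ξ + c * s) s * pdx w (ξ + c * s) s) := by
        linarith
      rw [h2]
      simp only [hg_def]
      ring
    rw [hval] at hgd
    exact hgd
  -- now show g T = 0 for all T ≥ 0
  intro T hT
  rcases eq_or_lt_of_le hT with hT0 | hT0
  · simp [← hT0, hc_def]
  suffices hgT : g T = 0 by
    have : w (ξ + c * T) T - c = 0 := hgT
    linarith [this]
  -- bound on pdx along the path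
  obtain ⟨C, hC⟩ : ∃ C : ℝ, ∀ s ∈ Set.Icc (0:ℝ) T, ‖fderivWithin ℝ f S (p s) (1,0)‖ ≤ C := by
    have hφ : ContinuousOn (fun s => fderivWithin ℝ f S (p s) ((1:ℝ),(0:ℝ))) (Set.Icc 0 T) := by
      have h1 : ContinuousOn (fun s => fderivWithin ℝ f S (p s)) (Set.Icc 0 T) :=
        hFc.comp hp_cont.continuousOn (fun s hs => hpS s hs.1)
      exact (ContinuousLinearMap.apply ℝ ℝ ((1:ℝ),(0:ℝ))).continuous.comp_continuousOn h1
    exact isCompact_Icc.exists_bound_of_continuousOn hφ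
  set K : ℝ := max C 0 with hK_def
  have hK0 : 0 ≤ K := le_max_right _ _
  have hKb : ∀ s ∈ Set.Icc (0:ℝ) T, |pdx w (ξ + c * s) s| ≤ K := by
    intro s hs
    have hx : pdx w (ξ + c * s) s = fderivWithin ℝ f S (p s) (1,0) := by
      simp only [hf_def, hS_def, hp_def]
      exact ((slice_x hsm (x := ξ + c * s) hs.1).deriv)
    rw [hx]
    exact le_trans (hC s hs) (le_max_left _ _)
  -- Gronwall on [ε, T]
  have key : ∀ ε : ℝ, ε ∈ Set.Ioc (0:ℝ) T → ‖g T‖ ≤ ‖g ε‖ * Real.exp (K * T) := by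
    intro ε hε
    have hgron := norm_le_gronwallBound_of_norm_deriv_right_le
      (f := g) (f' := fun s => -(pdx w (ξ + c * s) s) * g s)
      (δ := ‖g ε‖) (K := K) (ε := 0) (a := ε) (b := T)
      (hg_cont.mono (fun s hs => le_trans hε.1.le hs.1))
      (fun s hs => (hds s (lt_of_lt_of_le hε.1 hs.1)).hasDerivWithinAt)
      le_rfl
      (by
        intro s hs
        have : ‖-(pdx w (ξ + c * s) s) * g s‖ = |pdx w (ξ + c * s) s| * ‖g s‖ := by
          rw [norm_mul, norm_neg]; rfl
        rw [this, add_zero]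
        exact mul_le_mul_of_nonneg_right
          (hKb s ⟨le_trans hε.1.le hs.1, hs.2.le⟩) (norm_nonneg _))
      T ⟨hε.2, le_refl T⟩
    rw [gronwallBound_ε0] at hgron
    refine le_trans hgron (mul_le_mul_of_nonneg_left ?_ (norm_nonneg _))
    exact Real.exp_le_exp.2 (by nlinarith [hε.1])
  -- take ε → 0⁺
  have hlim : Filter.Tendsto (fun ε => ‖g ε‖ * Real.exp (K * T))
      (nhdsWithin 0 (Set.Ioi 0)) (nhds 0) := by
    have h1 : Filter.Tendsto g (nhdsWithin 0 (Set.Ioi 0)) (nhds 0) := by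
      have := (hg_cont 0 (Set.mem_Ici.2 le_rfl)).tendsto
      rw [hg0] at this
      exact this.mono_left (nhdsWithin_mono 0 Set.Ioi_subset_Ici_self)
    have := (h1.norm.mul_const (Real.exp (K * T)))
    simpa using this
  have hle : ∀ η : ℝ, 0 < η → ‖g T‖ ≤ η := by
    intro η hη
    have hev : ∀ᶠ ε in nhdsWithin 0 (Set.Ioi 0),
        ‖g ε‖ * Real.exp (K * T) < η ∧ ε ∈ Set.Ioc (0:ℝ) T := by
      refine Filter.Eventually.and ?_ ?_
      · exact hlim.eventually_lt_const hη
      · exact Filter.eventually_of_mem (Ioc_mem_nhdsGT hT0) (fun _ h => h)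
    obtain ⟨ε, hε1, hε2⟩ := hev.exists
    exact le_trans (key ε hε2) hε1.le
  have : ‖g T‖ ≤ 0 := le_of_forall_pos_le_add (by intro η hη; simpa using hle η hη)
  simpa using le_antisymm this (norm_nonneg _)

lemma tanh_eq' (x : ℝ) : Real.tanh x = (Real.exp (2*x) - 1)/(Real.exp (2*x) + 1) := by
  rw [Real.tanh_eq_sinh_div_cosh, Real.sinh_eq, Real.cosh_eq]
  have h1 : Real.exp (2*x) = Real.exp x * Real.exp x := by rw [two_mul, Real.exp_add]
  have h2 : Real.exp (-x) = (Real.exp x)⁻¹ := Real.exp_neg x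
  have h3 : Real.exp x > 0 := Real.exp_pos x
  rw [h1, h2]
  field_simp

lemma hasDerivAt_exp2 (x : ℝ) : HasDerivAt (fun y : ℝ => Real.exp (2*y)) (2 * Real.exp (2*x)) x := by
  have := (Real.hasDerivAt_exp (2*x)).comp x ((hasDerivAt_id x).const_mul 2)
  exact this.congr_deriv (by ring)

lemma hasDerivAt_tanh' (x : ℝ) :
    HasDerivAt Real.tanh (4 * Real.exp (2*x) / (Real.exp (2*x) + 1)^2) x := by
  have h0 : HasDerivAt (fun y => (Real.exp (2*y) - 1)/(Real.exp (2*y) + 1))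
      ((2 * Real.exp (2*x) * (Real.exp (2*x) + 1) - (Real.exp (2*x) - 1) * (2 * Real.exp (2*x))) / (Real.exp (2*x) + 1)^2) x :=
    (((hasDerivAt_exp2 x).sub_const 1).div ((hasDerivAt_exp2 x).add_const 1) (by positivity))
  have heq : Real.tanh = fun y => (Real.exp (2*y) - 1)/(Real.exp (2*y) + 1) := funext tanh_eq'
  rw [heq]
  convert h0 using 1
  ring
/-- If `w_r < 0`, then for every `(x,t) ∈ [0,∞) × [0,∞)` the smooth
solution of the Burgers Cauchy problem satisfies
`|w(x,t) − w_r| ≤ w̃ e^{−2(x + |w_r| t)}` and `|w_x(x,t)| ≤ 2 w̃ e^{−2(x + |w_r| t)}`. -/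
theorem burgers_right_exponential_decay
    (wl wbar wr : ℝ) (hwbar : 0 < wbar)
    (h1 : 0 < wr - wl) (h2 : wr - wl < wbar)
    (w : ℝ → ℝ → ℝ) (hw : IsBurgersSolution wl wr w)
    (hwr : wr < 0) :
    ∀ x t : ℝ, 0 ≤ x → 0 ≤ t →
      |w x t - wr| ≤ (wr - wl) * Real.exp (-2 * (x + |wr| * t)) ∧
      |pdx w x t| ≤ 2 * (wr - wl) * Real.exp (-2 * (x + |wr| * t)) := by
  obtain ⟨hsm, hpde, hinit⟩ := hw
  intro x t hx ht
  set w0 : ℝ → ℝ := fun ξ => (wr + wl)/2 + ((wr - wl)/2) * Real.tanh ξ with hw0_def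
  have hchar : ∀ ξ T : ℝ, 0 ≤ T → w (ξ + w0 ξ * T) T = w0 ξ := by
    intro ξ T hT
    have h := char_const hsm hpde ξ T hT
    rw [hinit ξ] at h
    exact h
  -- bound on w0
  have htanh_bdd : ∀ ξ : ℝ, -1 < Real.tanh ξ ∧ Real.tanh ξ < 1 := by
    intro ξ
    rw [tanh_eq']
    have hE : 0 < Real.exp (2*ξ) := Real.exp_pos _
    constructor
    · rw [lt_div_iff₀ (by positivity)]; linarith
    · rw [div_lt_one (by positivity)]; linarith
  set M : ℝ := |(wr + wl)/2| + (wr - wl)/2 with hM_def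
  have hw0_bdd : ∀ ξ : ℝ, |w0 ξ| ≤ M := by
    intro ξ
    have h := htanh_bdd ξ
    have h2' : |((wr - wl)/2) * Real.tanh ξ| ≤ (wr - wl)/2 := by
      rw [abs_mul]
      have : |Real.tanh ξ| ≤ 1 := abs_le.2 ⟨h.1.le, h.2.le⟩
      calc |(wr - wl)/2| * |Real.tanh ξ| ≤ |(wr - wl)/2| * 1 :=
            mul_le_mul_of_nonneg_left this (abs_nonneg _)
        _ = (wr - wl)/2 := by rw [mul_one, abs_of_pos (by linarith)]
    calc |w0 ξ| ≤ |(wr + wl)/2| + |((wr - wl)/2) * Real.tanh ξ| := abs_add_le _ _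
      _ ≤ M := by rw [hM_def]; linarith
  -- solve the characteristic equation via IVT
  have hw0_cont : Continuous w0 := by
    have htanh_c : Continuous Real.tanh := by
      have : Real.tanh = fun x => (Real.exp (2*x) - 1)/(Real.exp (2*x) + 1) := funext tanh_eq'
      rw [this]
      exact ((Real.continuous_exp.comp (continuous_const.mul continuous_id)).sub
        continuous_const).div
        ((Real.continuous_exp.comp (continuous_const.mul continuous_id)).add continuous_const)
        (fun x => by positivity)
    exact continuous_const.add (continuous_const.mul htanh_c)
  obtain ⟨ξ, hξ⟩ : ∃ ξ, ξ + w0 ξ * t = x := by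
    have hF_cont : Continuous (fun ξ => ξ + w0 ξ * t) :=
      continuous_id.add (hw0_cont.mul continuous_const)
    have hab : x - M*t ≤ x + M*t := by
      have h0M : 0 ≤ M := le_trans (abs_nonneg _) (hw0_bdd 0)
      nlinarith
    have hFa : (x - M*t) + w0 (x - M*t) * t ≤ x := by
      have := (abs_le.1 (hw0_bdd (x - M*t))).2
      nlinarith
    have hFb : x ≤ (x + M*t) + w0 (x + M*t) * t := by
      have := (abs_le.1 (hw0_bdd (x + M*t))).1
      nlinarith
    have := intermediate_value_Icc hab hF_cont.continuousOn (⟨hFa, hFb⟩ : x ∈ Set.Icc _ _)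
    obtain ⟨ξ, hξ1, hξ2⟩ := this
    exact ⟨ξ, hξ2⟩
  set E : ℝ := Real.exp (2*ξ) with hE_def
  have hE : 0 < E := Real.exp_pos _
  have hgap : wr - w0 ξ = (wr - wl)/(E + 1) := by
    rw [hw0_def]
    simp only
    rw [tanh_eq', ← hE_def]
    field_simp
    ring
  have hgap_pos : 0 < wr - w0 ξ := by rw [hgap]; positivity
  have hxi_ge : x + |wr| * t ≤ ξ := by
    have habs : |wr| = -wr := abs_of_neg hwr
    have hle : w0 ξ * t ≤ wr * t := mul_le_mul_of_nonneg_right (by linarith) ht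
    rw [habs]; linarith [hξ]
  have hexp_le : Real.exp (-2 * ξ) ≤ Real.exp (-2 * (x + |wr| * t)) :=
    Real.exp_le_exp.2 (by linarith)
  have hexp_inv : Real.exp (-2 * ξ) = 1/E := by
    rw [hE_def, eq_div_iff (Real.exp_pos _).ne', ← Real.exp_add]
    norm_num
  have hwxt : w x t = w0 ξ := by rw [← hξ]; exact hchar ξ t ht
  constructor
  · -- first bound
    rw [hwxt, abs_of_neg (by linarith)]
    have h1' : -(w0 ξ - wr) = (wr - wl)/(E + 1) := by rw [← hgap]; ring
    rw [h1']
    calc (wr - wl)/(E + 1) ≤ (wr - wl)/E := by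
          apply div_le_div_of_nonneg_left h1.le hE; linarith
      _ = (wr - wl) * Real.exp (-2*ξ) := by rw [hexp_inv]; ring
      _ ≤ (wr - wl) * Real.exp (-2 * (x + |wr| * t)) :=
          mul_le_mul_of_nonneg_left hexp_le h1.le
  · -- derivative bound
    set D : ℝ := 2*(wr - wl)*E/(E + 1)^2 with hD_def
    have hD_pos : 0 < D := by rw [hD_def]; positivity
    have hw0d : HasDerivAt w0 D ξ := by
      have h := ((hasDerivAt_tanh' ξ).const_mul ((wr - wl)/2)).const_add ((wr + wl)/2)
      refine h.congr_deriv ?_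
      rw [hD_def, ← hE_def]
      ring
    have hslice : HasDerivAt (fun y => w y t) (pdx w x t) x := by
      have h := slice_x hsm (x := x) ht
      have h2' := h.deriv
      rw [show pdx w x t = deriv (fun y => w y t) x from rfl, h2']
      exact h
    have hinner : HasDerivAt (fun ξ' => ξ' + w0 ξ' * t) (1 + D * t) ξ :=
      (hasDerivAt_id ξ).add (hw0d.mul_const t)
    have houter : HasDerivAt (fun y => w y t) (pdx w x t) (ξ + w0 ξ * t) := by
      rw [hξ]; exact hslice
    have hcomp : HasDerivAt (fun ξ' => w (ξ' + w0 ξ' * t) t) (pdx w x t * (1 + D * t)) ξ :=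
      HasDerivAt.comp (h₂ := fun y => w y t) ξ houter hinner
    have hΦeq : (fun ξ' => w (ξ' + w0 ξ' * t) t) = w0 := funext fun ξ' => hchar ξ' t ht
    rw [hΦeq] at hcomp
    have heq : pdx w x t * (1 + D * t) = D := hcomp.unique hw0d
    have hden : 0 < 1 + D * t := by nlinarith
    have hpdx_eq : pdx w x t = D / (1 + D * t) := (eq_div_iff hden.ne').2 heq
    have hpdx_pos : 0 < pdx w x t := by rw [hpdx_eq]; positivity
    rw [abs_of_pos hpdx_pos, hpdx_eq]
    have hstep1 : D / (1 + D * t) ≤ D := by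
      apply div_le_self hD_pos.le
      nlinarith
    have hstep2 : D ≤ 2*(wr - wl) * Real.exp (-2*ξ) := by
      rw [hexp_inv, hD_def, mul_one_div, div_le_div_iff₀ (by positivity) hE]
      nlinarith
    calc D / (1 + D * t) ≤ D := hstep1
      _ ≤ 2*(wr - wl) * Real.exp (-2*ξ) := hstep2
      _ ≤ 2 * (wr - wl) * Real.exp (-2 * (x + |wr| * t)) := by
          have := mul_le_mul_of_nonneg_left hexp_le (by linarith : (0:ℝ) ≤ 2*(wr - wl))
          linarith
end
end

section
/- Let w^r(x/t) denote the self-similar Riemann solution of the Burgers equation w_t + w w_x = 0 with Riemann initial data equal to w_l for x < 0 and w_r for x > 0 (the rarefaction fan, since w_l < w_r). Then the global smooth solution w of the Burgers Cauchy problem with tanh initial data converges uniformly to the Riemann solution: lim_{t→+∞} sup_{x∈ℝ} |w(x,t) − w^r(x/t)| = 0. -/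
open Real Set

noncomputable section

/-- The self-similar (rarefaction fan) Riemann solution of the Burgers equation with
Riemann data `w_l` for `x < 0` and `w_r` for `x > 0`, `w_l < w_r`, as a function of `ξ = x/t`. -/
def riemannFan (wl wr : ℝ) (ξ : ℝ) : ℝ :=
  if ξ ≤ wl then wl else if ξ ≤ wr then ξ else wr

lemma aux_tanh_lt_one (y : ℝ) : Real.tanh y < 1 := by
  rw [Real.tanh_eq_sinh_div_cosh, div_lt_one (Real.cosh_pos y)]
  exact Real.sinh_lt_cosh y

lemma aux_neg_one_lt_tanh (y : ℝ) : -1 < Real.tanh y := by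
  have := aux_tanh_lt_one (-y); rw [Real.tanh_neg] at this; linarith

lemma aux_one_sub_tanh_le (y : ℝ) : 1 - Real.tanh y ≤ 2 * Real.exp (-(2*y)) := by
  have hc := Real.cosh_pos y
  have h1 : 1 - Real.tanh y = Real.exp (-y) / Real.cosh y := by
    rw [Real.tanh_eq_sinh_div_cosh]
    field_simp
    rw [Real.cosh_eq, Real.sinh_eq]; ring
  rw [h1]
  have h2 : Real.exp y / 2 ≤ Real.cosh y := by
    rw [Real.cosh_eq]; have := (Real.exp_pos (-y)).le; linarith
  have h3 : Real.exp (-y) / Real.cosh y ≤ Real.exp (-y) / (Real.exp y / 2) := by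
    apply div_le_div_of_nonneg_left (Real.exp_pos _).le (by positivity) h2
  refine h3.trans (le_of_eq ?_)
  rw [div_div_eq_mul_div, div_eq_iff (Real.exp_pos y).ne']
  rw [mul_assoc, ← Real.exp_add]
  ring_nf

lemma fan_eq_clamp (wl wr : ℝ) (h : wl ≤ wr) (ξ : ℝ) :
    riemannFan wl wr ξ = max wl (min ξ wr) := by
  unfold riemannFan
  rcases le_or_gt ξ wl with h1 | h1
  · rw [if_pos h1, max_eq_left (le_trans (min_le_left _ _) h1)]
  · rw [if_neg (not_le.2 h1)]
    rcases le_or_gt ξ wr with h2 | h2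
    · rw [if_pos h2, min_eq_left h2, max_eq_right h1.le]
    · rw [if_neg (not_le.2 h2), min_eq_right h2.le, max_eq_right h]

lemma burgers_char (wl wr : ℝ) (w : ℝ → ℝ → ℝ) (hw : IsBurgersSolution wl wr w)
    {t : ℝ} (ht : 0 < t) (y : ℝ) :
    w (y + t * ((wr + wl) / 2 + ((wr - wl) / 2) * Real.tanh y)) t
      = (wr + wl) / 2 + ((wr - wl) / 2) * Real.tanh y := by
  obtain ⟨hsm, hpde, hini⟩ := hw
  set c : ℝ := (wr + wl) / 2 + ((wr - wl) / 2) * Real.tanh y with hc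
  set S : Set (ℝ × ℝ) := Set.univ ×ˢ Set.Ici (0 : ℝ) with hS
  set W : ℝ × ℝ → ℝ := fun p => w p.1 p.2 with hW
  set γ : ℝ → ℝ × ℝ := fun s => (y + s * c, s) with hγ
  set h : ℝ → ℝ := fun s => W (γ s) - c with hh
  -- uniqueness of diff
  have hU : UniqueDiffOn ℝ S := uniqueDiffOn_univ.prod (uniqueDiffOn_Ici 0)
  -- interior derivative facts
  have hnhds : ∀ p : ℝ × ℝ, 0 < p.2 → S ∈ nhds p := by
    intro p hp
    exact prod_mem_nhds Filter.univ_mem (Ici_mem_nhds hp)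
  have hfd : ∀ p : ℝ × ℝ, 0 < p.2 → HasFDerivAt W (fderivWithin ℝ W S p) p := by
    intro p hp
    rw [fderivWithin_of_mem_nhds (hnhds p hp)]
    exact ((hsm.contDiffAt (hnhds p hp)).differentiableAt (by simp)).hasFDerivAt
  -- γ maps into S and is continuous
  have hγS : ∀ s : ℝ, 0 ≤ s → γ s ∈ S := fun s hs => ⟨mem_univ _, hs⟩
  have hγcont : Continuous γ := by fun_prop
  -- continuity of h on [0, t]
  have hhc : ContinuousOn h (Icc 0 t) := by
    apply ContinuousOn.sub _ continuousOn_const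
    exact hsm.continuousOn.comp hγcont.continuousOn (fun s hs => hγS s hs.1)
  -- bound on the derivative on the compact image
  obtain ⟨K, hK⟩ := (isCompact_Icc.image hγcont).exists_bound_of_continuousOn
    ((hsm.continuousOn_fderivWithin hU (by simp)).mono
      (by rintro p ⟨s, hs, rfl⟩; exact hγS s hs.1))
  set K' : ℝ := max K 0 with hK'
  have hK'0 : 0 ≤ K' := le_max_right _ _
  -- partial derivatives in terms of the full derivative
  have hpdx : ∀ p : ℝ × ℝ, 0 < p.2 → pdx w p.1 p.2 = fderivWithin ℝ W S p (1, 0) := by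
    intro p hp
    have : HasDerivAt (fun x => W (x, p.2)) (fderivWithin ℝ W S p (1, 0)) p.1 := by
      have := (hfd p hp).comp_hasDerivAt p.1
        ((hasDerivAt_id p.1).prodMk (hasDerivAt_const p.1 p.2))
      exact this
    exact this.deriv
  have hpdt : ∀ p : ℝ × ℝ, 0 < p.2 → pdt w p.1 p.2 = fderivWithin ℝ W S p (0, 1) := by
    intro p hp
    have : HasDerivAt (fun s => W (p.1, s)) (fderivWithin ℝ W S p (0, 1)) p.2 := by
      have := (hfd p hp).comp_hasDerivAt p.2
        ((hasDerivAt_const p.2 p.1).prodMk (hasDerivAt_id p.2))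
      exact this
    exact this.deriv
  -- derivative of h at interior points
  set f' : ℝ → ℝ := fun s => fderivWithin ℝ W S (γ s) (c, 1) with hf'def
  have hhd : ∀ s ∈ Ioo (0:ℝ) t, HasDerivAt h (f' s) s := by
    intro s hs
    have hγd : HasDerivAt γ (c, 1) s := by
      have := (((hasDerivAt_id s).mul_const c).const_add y).prodMk (hasDerivAt_id s)
      simpa [hγ] using this
    exact (((hfd (γ s) hs.1).comp_hasDerivAt s hγd)).sub_const c
  -- the PDE gives the bound ‖f' s‖ ≤ K' * ‖h s‖
  have hbound : ∀ s ∈ Ioo (0:ℝ) t, ‖f' s‖ ≤ K' * ‖h s‖ := by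
    intro s hs
    have hps : (0:ℝ) < (γ s).2 := hs.1
    have hsplit : ((c, 1) : ℝ × ℝ) = (0, 1) + c • (1, 0) := by simp
    have h1 : f' s = pdt w (γ s).1 (γ s).2 + c * pdx w (γ s).1 (γ s).2 := by
      rw [hf'def]
      simp only [hsplit, map_add, map_smul]
      rw [hpdt _ hps, hpdx _ hps]; simp [smul_eq_mul]
    have h2 : pdt w (γ s).1 (γ s).2 = - (w (γ s).1 (γ s).2 * pdx w (γ s).1 (γ s).2) := by
      have := hpde (γ s).1 (γ s).2 hps
      linarith
    have h3 : f' s = - h s * pdx w (γ s).1 (γ s).2 := by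
      rw [h1, h2, hh]
      simp only [hW]
      ring
    have h4 : |pdx w (γ s).1 (γ s).2| ≤ K' := by
      rw [hpdx _ hps]
      calc |fderivWithin ℝ W S (γ s) (1, 0)| ≤ ‖fderivWithin ℝ W S (γ s)‖ * ‖((1:ℝ), (0:ℝ))‖ :=
            (fderivWithin ℝ W S (γ s)).le_opNorm _
        _ ≤ K' * 1 := by
            apply mul_le_mul _ _ (norm_nonneg _) hK'0
            · exact le_trans (hK _ ⟨s, ⟨hs.1.le, hs.2.le⟩, rfl⟩) (le_max_left _ _)
            · simp [Prod.norm_def]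
        _ = K' := mul_one _
    rw [h3]
    rw [Real.norm_eq_abs, abs_mul, abs_neg]
    rw [mul_comm]
    exact mul_le_mul h4 le_rfl (abs_nonneg _) hK'0
  -- Gronwall on [σ, t] for each σ ∈ (0, t]
  have hgron : ∀ σ ∈ Ioo (0:ℝ) t, ‖h t‖ ≤ ‖h σ‖ * Real.exp (K' * t) := by
    intro σ hσ
    have := norm_le_gronwallBound_of_norm_deriv_right_le (f := h) (f' := f')
      (δ := ‖h σ‖) (K := K') (ε := 0) (a := σ) (b := t)
      (hhc.mono (Icc_subset_Icc hσ.1.le le_rfl))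
      (fun s hs => (hhd s ⟨hσ.1.trans_le hs.1, hs.2⟩).hasDerivWithinAt)
      le_rfl
      (fun s hs => by simpa using hbound s ⟨hσ.1.trans_le hs.1, hs.2⟩)
      t ⟨hσ.2.le, le_rfl⟩
    rw [gronwallBound_ε0] at this
    refine this.trans ?_
    apply mul_le_mul_of_nonneg_left _ (norm_nonneg _)
    exact Real.exp_le_exp.2 (mul_le_mul_of_nonneg_left (by linarith [hσ.1]) hK'0)
  -- h 0 = 0
  have hh0 : h 0 = 0 := by
    simp only [hh, hγ, hW]
    simp only [zero_mul, add_zero]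
    rw [hini y]
    exact sub_self c
  -- limit σ → 0⁺
  haveI hne : (nhdsWithin (0:ℝ) (Ioo 0 t)).NeBot := left_nhdsWithin_Ioo_neBot ht
  have hlim : Filter.Tendsto (fun σ => ‖h σ‖ * Real.exp (K' * t))
      (nhdsWithin (0:ℝ) (Ioo 0 t)) (nhds 0) := by
    have h0m : (0:ℝ) ∈ Icc (0:ℝ) t := ⟨le_rfl, ht.le⟩
    have := (hhc 0 h0m).norm.mul_const (Real.exp (K' * t))
    have h2 := this.mono_left (nhdsWithin_mono 0 (Ioo_subset_Icc_self))
    simpa [hh0] using h2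
  have : ‖h t‖ ≤ 0 :=
    ge_of_tendsto hlim (Filter.eventually_of_mem self_mem_nhdsWithin hgron)
  have := norm_eq_zero.1 (le_antisymm this (norm_nonneg _))
  have : W (γ t) = c := by rwa [hh, sub_eq_zero] at this
  exact this


lemma ini_surj (wl wr : ℝ) (h : wl ≤ wr) {t : ℝ} (ht : 0 ≤ t) :
    Function.Surjective (fun y : ℝ => y + t * ((wr + wl) / 2 + ((wr - wl) / 2) * Real.tanh y)) := by
  set d : ℝ := (wr - wl) / 2 with hd
  have hd0 : 0 ≤ d := by simp [hd]; linarith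
  have htanh : ∀ y : ℝ, -1 ≤ Real.tanh y ∧ Real.tanh y ≤ 1 := by
    intro y
    constructor
    · linarith [ (by
        rw [Real.tanh_eq_sinh_div_cosh, div_lt_one (Real.cosh_pos (-y))]
        exact Real.sinh_lt_cosh (-y) : Real.tanh (-y) < 1), (Real.tanh_neg (x := y)) ]
    · linarith [ (by
        rw [Real.tanh_eq_sinh_div_cosh, div_lt_one (Real.cosh_pos y)]
        exact Real.sinh_lt_cosh y : Real.tanh y < 1) ]
  have hlb : ∀ y : ℝ, y + t * wl ≤ y + t * ((wr + wl) / 2 + d * Real.tanh y) := by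
    intro y
    have h1 : wl ≤ (wr + wl) / 2 + d * Real.tanh y := by
      nlinarith [(htanh y).1]
    nlinarith
  have hub : ∀ y : ℝ, y + t * ((wr + wl) / 2 + d * Real.tanh y) ≤ y + t * wr := by
    intro y
    have h1 : (wr + wl) / 2 + d * Real.tanh y ≤ wr := by
      nlinarith [(htanh y).2]
    nlinarith
  apply Continuous.surjective
  · have : Continuous Real.tanh := by
      simp only [funext Real.tanh_eq_sinh_div_cosh]
      exact Real.continuous_sinh.div Real.continuous_cosh fun x => (Real.cosh_pos x).ne'
    fun_prop
  · exact Filter.tendsto_atTop_mono hlb (Filter.tendsto_atTop_add_const_right _ _ Filter.tendsto_id)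
  · exact Filter.tendsto_atBot_mono hub (Filter.tendsto_atBot_add_const_right _ _ Filter.tendsto_id)


/-- The smooth solution of the Burgers Cauchy problem with tanh initial
data converges, uniformly in `x` as `t → +∞`, to the rarefaction-fan Riemann solution:
`lim_{t→∞} sup_x |w(x,t) − w^r(x/t)| = 0`. -/
theorem burgers_converges_to_riemann_fan
    (wl wbar wr : ℝ) (hwbar : 0 < wbar)
    (h1 : 0 < wr - wl) (h2 : wr - wl < wbar)
    (w : ℝ → ℝ → ℝ) (hw : IsBurgersSolution wl wr w) :
    ∀ ε : ℝ, 0 < ε → ∃ T : ℝ, 0 < T ∧ ∀ t : ℝ, T ≤ t → ∀ x : ℝ,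
      |w x t - riemannFan wl wr (x / t)| < ε := by
  have hchar : ∀ {t : ℝ}, 0 < t → ∀ y : ℝ,
      w (y + t * ((wr + wl) / 2 + ((wr - wl) / 2) * Real.tanh y)) t
        = (wr + wl) / 2 + ((wr - wl) / 2) * Real.tanh y :=
    fun {t} ht y => burgers_char wl wr w hw ht y
  have hsurj : ∀ {t : ℝ}, 0 ≤ t → Function.Surjective
      (fun y : ℝ => y + t * ((wr + wl) / 2 + ((wr - wl) / 2) * Real.tanh y)) :=
    fun {t} ht => ini_surj wl wr (by linarith) ht
  intro ε hε
  set d : ℝ := (wr - wl) / 2 with hd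
  set m : ℝ := (wr + wl) / 2 with hm
  have hd0 : 0 < d := by rw [hd]; linarith
  set u : ℝ → ℝ := fun y => m + d * Real.tanh y with hu
  have hulo : ∀ y, wl < u y := by
    intro y
    have := aux_neg_one_lt_tanh y
    simp only [hu, hm, hd]
    nlinarith
  have huhi : ∀ y, u y < wr := by
    intro y
    have := aux_tanh_lt_one y
    simp only [hu, hm, hd]
    nlinarith
  -- choose R
  have htend : Filter.Tendsto (fun R : ℝ => 2 * d * Real.exp (-(2*R))) Filter.atTop (nhds 0) := by
    have : Filter.Tendsto (fun R : ℝ => -(2*R)) Filter.atTop Filter.atBot := by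
      apply Filter.tendsto_neg_atBot_iff.2
      exact (Filter.tendsto_id.const_mul_atTop (by norm_num : (0:ℝ) < 2))
    have := Real.tendsto_exp_atBot.comp this
    simpa using this.const_mul (2*d)
  obtain ⟨R, hR⟩ := ((htend.eventually (gt_mem_nhds (by linarith : (0:ℝ) < ε/2))).and
    (Filter.eventually_gt_atTop 0)).exists
  obtain ⟨hRε, hR0⟩ := hR
  refine ⟨max 1 (2*R/ε), lt_of_lt_of_le one_pos (le_max_left _ _), ?_⟩
  intro t htT x
  have ht1 : (1:ℝ) ≤ t := le_trans (le_max_left _ _) htT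
  have ht0 : (0:ℝ) < t := lt_of_lt_of_le one_pos ht1
  obtain ⟨y, hy⟩ := hsurj (le_of_lt ht0) x
  simp only at hy
  have hwxt : w x t = u y := by
    rw [← hy]; exact hchar ht0 y
  have hξ : x / t = u y + y / t := by
    rw [← hy]; field_simp [hu, hm, hd]; ring
  rw [hwxt, fan_eq_clamp wl wr (by linarith) _, hξ]
  have huy_mem : wl ≤ u y ∧ u y ≤ wr := ⟨(hulo y).le, (huhi y).le⟩
  rcases le_or_gt (|y|) R with hyR | hyR
  · -- |y| ≤ R : clamp is 1-Lipschitz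
    have hclose : |u y + y / t - u y| ≤ ε / 2 := by
      rw [add_sub_cancel_left, abs_div, abs_of_pos ht0]
      rw [div_le_iff₀ ht0]
      have h5 : 2 * R / ε ≤ t := le_trans (le_max_right _ _) htT
      rw [div_le_iff₀ hε] at h5
      linarith
    have hcl : max wl (min (u y) wr) = u y := by
      rw [min_eq_left huy_mem.2, max_eq_right huy_mem.1]
    calc |u y - max wl (min (u y + y/t) wr)|
        = |max (min (u y) wr) wl - max (min (u y + y/t) wr) wl| := by
          rw [max_comm (min (u y) wr) wl, hcl, max_comm wl ((u y + y/t) ⊓ wr)]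
      _ ≤ |min (u y) wr - min (u y + y/t) wr| := abs_max_sub_max_le_abs _ _ _
      _ ≤ max (|u y - (u y + y/t)|) (|wr - wr|) := abs_min_sub_min_le_max _ _ _ _
      _ ≤ ε / 2 := by
          apply max_le
          · rw [abs_sub_comm]; exact hclose
          · simp; linarith
      _ < ε := by linarith
  · rcases le_or_gt 0 y with hy0 | hy0
    · -- y > R case (y positive large)
      have hyR' : R < y := by rwa [abs_of_nonneg hy0] at hyR
      have htail : wr - u y < ε / 2 := by
        have h1 : wr - u y = d * (1 - Real.tanh y) := by
          simp only [hu, hm, hd]; ring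
        have h2 : 1 - Real.tanh y ≤ 2 * Real.exp (-(2*y)) := aux_one_sub_tanh_le y
        have h3 : Real.exp (-(2*y)) ≤ Real.exp (-(2*R)) :=
          Real.exp_le_exp.2 (by linarith)
        calc wr - u y = d * (1 - Real.tanh y) := h1
          _ ≤ d * (2 * Real.exp (-(2*R))) := by nlinarith
          _ = 2 * d * Real.exp (-(2*R)) := by ring
          _ < ε / 2 := hRε
      have hξge : u y ≤ u y + y / t := by
        have : 0 ≤ y / t := div_nonneg hy0 ht0.le
        linarith
      have hfan_lo : u y ≤ max wl (min (u y + y/t) wr) := by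
        have : u y ≤ min (u y + y/t) wr := le_min hξge huy_mem.2
        exact le_trans this (le_max_right _ _)
      have hfan_hi : max wl (min (u y + y/t) wr) ≤ wr :=
        max_le (by linarith) (min_le_right _ _)
      rw [abs_sub_comm, abs_of_nonneg (by linarith)]
      linarith
    · -- y < -R case
      have hyR' : y < -R := by
        rw [abs_of_neg hy0] at hyR; linarith
      have htail : u y - wl < ε / 2 := by
        have h1 : u y - wl = d * (1 + Real.tanh y) := by
          simp only [hu, hm, hd]; ring
        have h2 : 1 + Real.tanh y ≤ 2 * Real.exp (-(2*(-y))) := by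
          have := aux_one_sub_tanh_le (-y)
          rw [Real.tanh_neg] at this
          linarith
        have h3 : Real.exp (-(2*(-y))) ≤ Real.exp (-(2*R)) :=
          Real.exp_le_exp.2 (by linarith)
        calc u y - wl = d * (1 + Real.tanh y) := h1
          _ ≤ d * (2 * Real.exp (-(2*R))) := by nlinarith
          _ = 2 * d * Real.exp (-(2*R)) := by ring
          _ < ε / 2 := hRε
      have hξle : u y + y / t ≤ u y := by
        have : y / t ≤ 0 := div_nonpos_of_nonpos_of_nonneg hy0.le ht0.le
        linarith
      have hfan_hi : max wl (min (u y + y/t) wr) ≤ u y := by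
        apply max_le huy_mem.1
        exact le_trans (min_le_left _ _) (by linarith)
      have hfan_lo : wl ≤ max wl (min (u y + y/t) wr) := le_max_left _ _
      rw [abs_of_nonneg (by linarith)]
      linarith
end
end
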